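/- arXiv:2103.02599 — 5 statements merged into one kernel-verified Lean document; each statement's English description precedes it below -/
import Mathlib

section
/- Let q be a positive integer and let B = {(0,0), (3q,0), (0,3q), (-3q,0), (0,-3q)} ⊂ ℝ². Then for every z ∈ ℝ² there exists b ∈ B such that either ‖z − b‖₂ ≤ 6q or ‖z − b‖₂ ≤ ‖z‖₂ − q. -/
/-! If `‖z‖ ≤ 6q` the origin works. Otherwise let `a = max |z₀| |z₁|`, so that `‖z‖² ≤ 2a²`, and
take the point `b` of `B \ {0}` pointing in the direction of the dominant coordinate of `z`; then
`⟪z, b⟫ = 3qa` and `‖z - b‖² = ‖z‖² - 6qa + 9q²`. Since `a ≥ ‖z‖/√2` and `‖z‖ > 6q`, this is at most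
`(‖z‖ - q)²`. -/

open RealInnerProductSpace

theorem norm_sub_le_norm_sub_of_le {E : Type*} [NormedAddCommGroup E] [InnerProductSpace ℝ E]
    {z v : E} {c : ℝ} (hcz : c ≤ ‖z‖) (h : ‖v‖ ^ 2 + 2 * c * ‖z‖ ≤ 2 * ⟪z, v⟫ + c ^ 2) :
    ‖z - v‖ ≤ ‖z‖ - c := by
  rw [← pow_le_pow_iff_left₀ (norm_nonneg _) (sub_nonneg.2 hcz) two_ne_zero, norm_sub_sq_real]
  nlinarith

theorem two_mul_add_le_of_sq_le {N a c : ℝ} (hc : 0 ≤ c) (ha : 0 ≤ a) (hcN : 6 * c ≤ N)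
    (hNa : N ^ 2 ≤ 2 * a ^ 2) : 2 * N + 8 * c ≤ 6 * a := by
  rw [← pow_le_pow_iff_left₀ (by linarith) (by linarith) two_ne_zero]
  nlinarith

namespace EuclideanSpace

theorem norm_sq_le_two_mul_max_abs_sq (z : EuclideanSpace ℝ (Fin 2)) :
    ‖z‖ ^ 2 ≤ 2 * max |z 0| |z 1| ^ 2 := by
  rw [norm_sq_eq, Fin.sum_univ_two, Real.norm_eq_abs, Real.norm_eq_abs]
  rcases le_total |z 0| |z 1| with h | h
  · rw [max_eq_right h]; nlinarith [abs_nonneg (z 0)]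
  · rw [max_eq_left h]; nlinarith [abs_nonneg (z 1)]

theorem inner_toLp_vecCons (z : EuclideanSpace ℝ (Fin 2)) (a b : ℝ) :
    ⟪z, !₂[a, b]⟫ = z 0 * a + z 1 * b := by
  simp only [PiLp.inner_apply, RCLike.inner_apply, Real.ringHom_apply, Fin.sum_univ_two,
    Matrix.cons_val_zero, Matrix.cons_val_one, Matrix.cons_val_fin_one]
  ring

theorem norm_toLp_vecCons_sq (a b : ℝ) : ‖!₂[a, b]‖ ^ 2 = a ^ 2 + b ^ 2 := by
  simp [norm_sq_eq, Fin.sum_univ_two]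

end EuclideanSpace

open EuclideanSpace

def axisPoints (r : ℝ) : Set (EuclideanSpace ℝ (Fin 2)) :=
  {(WithLp.equiv 2 (Fin 2 → ℝ)).symm ![r, 0],
   (WithLp.equiv 2 (Fin 2 → ℝ)).symm ![0, r],
   (WithLp.equiv 2 (Fin 2 → ℝ)).symm ![-r, 0],
   (WithLp.equiv 2 (Fin 2 → ℝ)).symm ![0, -r]}

theorem exists_mem_axisPoints_inner_eq (z : EuclideanSpace ℝ (Fin 2)) (r : ℝ) :
    ∃ v ∈ axisPoints r, ‖v‖ ^ 2 = r ^ 2 ∧ ⟪z, v⟫ = r * max |z 0| |z 1| := by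
  rcases le_total |z 1| |z 0| with h | h
  · rw [max_eq_left h]
    rcases abs_cases (z 0) with ⟨hz, -⟩ | ⟨hz, -⟩
    · refine ⟨!₂[r, 0], by simp [axisPoints], ?_⟩
      simp [norm_toLp_vecCons_sq, inner_toLp_vecCons, hz, mul_comm]
    · refine ⟨!₂[-r, 0], by simp [axisPoints], ?_⟩
      simp [norm_toLp_vecCons_sq, inner_toLp_vecCons, hz, mul_comm]
  · rw [max_eq_right h]
    rcases abs_cases (z 1) with ⟨hz, -⟩ | ⟨hz, -⟩
    · refine ⟨!₂[0, r], by simp [axisPoints], ?_⟩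
      simp [norm_toLp_vecCons_sq, inner_toLp_vecCons, hz, mul_comm]
    · refine ⟨!₂[0, -r], by simp [axisPoints], ?_⟩
      simp [norm_toLp_vecCons_sq, inner_toLp_vecCons, hz, mul_comm]

theorem stmt_0_general (q : ℕ) (z : EuclideanSpace ℝ (Fin 2)) :
    ∃ b ∈ ({(WithLp.equiv 2 (Fin 2 → ℝ)).symm ![0, 0],
            (WithLp.equiv 2 (Fin 2 → ℝ)).symm ![3 * (q : ℝ), 0],
            (WithLp.equiv 2 (Fin 2 → ℝ)).symm ![0, 3 * (q : ℝ)],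
            (WithLp.equiv 2 (Fin 2 → ℝ)).symm ![-(3 * (q : ℝ)), 0],
            (WithLp.equiv 2 (Fin 2 → ℝ)).symm ![0, -(3 * (q : ℝ))]} :
          Set (EuclideanSpace ℝ (Fin 2))),
      ‖z - b‖ ≤ 6 * (q : ℝ) ∨ ‖z - b‖ ≤ ‖z‖ - (q : ℝ) := by
  by_cases hz : ‖z‖ ≤ 6 * q
  · refine ⟨_, Set.mem_insert _ _, Or.inl ?_⟩
    rwa [show (WithLp.equiv 2 (Fin 2 → ℝ)).symm ![0, 0] = 0 by ext i; fin_cases i <;> rfl,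
      sub_zero]
  obtain ⟨v, hvB, hv_norm, hv_inner⟩ := exists_mem_axisPoints_inner_eq z (3 * q)
  refine ⟨v, Set.mem_insert_of_mem _ hvB, Or.inr (norm_sub_le_norm_sub_of_le (by linarith) ?_)⟩
  have hq₀ : (0 : ℝ) ≤ q := Nat.cast_nonneg q
  have hdom := two_mul_add_le_of_sq_le hq₀ (le_max_of_le_left (abs_nonneg _)) (by linarith)
    (norm_sq_le_two_mul_max_abs_sq z)
  rw [hv_norm, hv_inner]
  nlinarith

theorem stmt_0 (q : ℕ) (hq : 0 < q) (z : EuclideanSpace ℝ (Fin 2)) :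
    ∃ b ∈ ({(WithLp.equiv 2 (Fin 2 → ℝ)).symm ![0, 0],
            (WithLp.equiv 2 (Fin 2 → ℝ)).symm ![3 * (q : ℝ), 0],
            (WithLp.equiv 2 (Fin 2 → ℝ)).symm ![0, 3 * (q : ℝ)],
            (WithLp.equiv 2 (Fin 2 → ℝ)).symm ![-(3 * (q : ℝ)), 0],
            (WithLp.equiv 2 (Fin 2 → ℝ)).symm ![0, -(3 * (q : ℝ))]} :
          Set (EuclideanSpace ℝ (Fin 2))),
      ‖z - b‖ ≤ 6 * (q : ℝ) ∨ ‖z - b‖ ≤ ‖z‖ - (q : ℝ) :=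
  stmt_0_general q z
end

section
/- Let J ∈ ℝ^{m×m} be a real Jordan block to an eigenvalue λ with |λ| < 1, and let E = {ε ∈ ℝ^m : ‖ε‖_∞ < 1/3}. Then there exist a norm ‖·‖_c on ℝ^m and a constant γ > 0 such that for all x ∈ ℝ^m and ε ∈ E, setting y = Jx + ε: if ‖x‖_c ≤ γ then ‖y‖_c ≤ γ, and if ‖x‖_c ≥ γ then ‖y‖_c ≤ ‖x‖_c − 1/2. -/
/-- `J` is a real Jordan block to the eigenvalue `lam`: if `lam` is real, it has `lam` on the
diagonal and `1` on the superdiagonal; if `lam = a + ib` is non-real, it consists of `2×2`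
blocks `R = [[a, b], [-b, a]]` on the diagonal and `2×2` identity blocks on the superdiagonal. -/
def IsRealJordanBlock {m : ℕ} (J : Matrix (Fin m) (Fin m) ℝ) (lam : ℂ) : Prop :=
  (lam.im = 0 ∧ ∀ i j : Fin m,
      J i j = if (j : ℕ) = (i : ℕ) then lam.re
        else if (j : ℕ) = (i : ℕ) + 1 then 1 else 0) ∨
  (lam.im ≠ 0 ∧ (∃ ℓ : ℕ, m = 2 * ℓ) ∧ ∀ i j : Fin m,
      J i j = if (j : ℕ) / 2 = (i : ℕ) / 2 then
          (if (i : ℕ) % 2 = (j : ℕ) % 2 then lam.re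
            else if (i : ℕ) % 2 = 0 then lam.im else -lam.im)
        else if (j : ℕ) = (i : ℕ) + 2 then 1 else 0)

/-- `N` is a norm on `ℝ^m`. -/
def IsNormOn {m : ℕ} (N : (Fin m → ℝ) → ℝ) : Prop :=
  (∀ x, N x = 0 → x = 0) ∧ (∀ (c : ℝ) (x), N (c • x) = |c| * N x) ∧
    ∀ x y, N (x + y) ≤ N x + N y

/-!
Conjugating `J` by `diag(1, t, t², …)` turns it into `λ + t⁻¹ • shift`. In the complex case one
first reads the coordinate pairs `(x₂ₖ, x₂ₖ₊₁)` as complex numbers `zₖ = x₂ₖ + i x₂ₖ₊₁`, on which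
`J` acts as the complex Jordan block of `conj λ`. Hence the weighted sup norm
`‖x‖_c = maxₖ tᵏ |zₖ|` satisfies `‖J x‖_c ≤ (|λ| + t⁻¹) ‖x‖_c = ρ ‖x‖_c`, with
`ρ = (1 + |λ|) / 2 < 1` for `t = 2 / (1 - |λ|)`. As `‖ε‖_c ≤ C ‖ε‖_∞`, we get
`‖J x + ε‖_c ≤ ρ ‖x‖_c + C / 3`, and `γ = (C / 3 + 1/2) / (1 - ρ)`, the solution of
`ρ γ + C / 3 = γ - 1/2`, does both jobs.
-/

lemma isNormOn_norm_comp {m : ℕ} {V : Type*} [NormedAddCommGroup V] [NormedSpace ℝ V]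
    (T : (Fin m → ℝ) →ₗ[ℝ] V) (hT : Function.Injective T) : IsNormOn (fun x => ‖T x‖) :=
  ⟨fun x hx => by rwa [norm_eq_zero, map_eq_zero_iff T hT] at hx,
    fun c x => by simp only [map_smul, norm_smul, Real.norm_eq_abs],
    fun x y => by simpa only [map_add] using norm_add_le (T x) (T y)⟩

section JordanShift

variable {𝕜 : Type*} [NormedDivisionRing 𝕜] [NormedSpace ℝ 𝕜] {ℓ : ℕ}

def jordanShift (μ : 𝕜) (z : Fin ℓ → 𝕜) (k : Fin ℓ) : 𝕜 :=
  μ * z k + if h : (k : ℕ) + 1 < ℓ then z ⟨k + 1, h⟩ else 0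

def powerWeight (t : ℝ) : (Fin ℓ → 𝕜) →ₗ[ℝ] (Fin ℓ → 𝕜) :=
  LinearMap.pi fun k => t ^ (k : ℕ) • LinearMap.proj k

@[simp]
lemma powerWeight_apply (t : ℝ) (z : Fin ℓ → 𝕜) (k : Fin ℓ) :
    powerWeight t z k = t ^ (k : ℕ) • z k := rfl

lemma powerWeight_injective {t : ℝ} (ht : t ≠ 0) :
    Function.Injective (powerWeight (𝕜 := 𝕜) (ℓ := ℓ) t) := by
  intro z w h
  funext k
  exact smul_right_injective 𝕜 (pow_ne_zero _ ht) (congrFun h k)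

lemma norm_powerWeight_jordanShift_le (μ : 𝕜) {t : ℝ} (ht : 0 < t) (z : Fin ℓ → 𝕜) :
    ‖powerWeight t (jordanShift μ z)‖ ≤ (‖μ‖ + t⁻¹) * ‖powerWeight t z‖ := by
  have hcoord (k : Fin ℓ) : t ^ (k : ℕ) * ‖z k‖ ≤ ‖powerWeight t z‖ := by
    simpa [norm_smul, abs_of_pos ht] using norm_le_pi_norm (powerWeight t z) k
  refine (pi_norm_le_iff_of_nonneg (by positivity)).2 fun k => ?_
  have hdiag : t ^ (k : ℕ) * ‖μ * z k‖ ≤ ‖μ‖ * ‖powerWeight t z‖ := by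
    rw [norm_mul, mul_left_comm]
    exact mul_le_mul_of_nonneg_left (hcoord k) (norm_nonneg μ)
  have hsuper : t ^ (k : ℕ) * ‖if h : (k : ℕ) + 1 < ℓ then z ⟨k + 1, h⟩ else 0‖ ≤
      t⁻¹ * ‖powerWeight t z‖ := by
    split_ifs with h
    · have := hcoord ⟨k + 1, h⟩
      rw [pow_succ'] at this
      rw [le_inv_mul_iff₀ ht]
      linarith
    · simp only [norm_zero, mul_zero]; positivity
  calc ‖powerWeight t (jordanShift μ z) k‖
      ≤ t ^ (k : ℕ) * ‖μ * z k‖ +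
          t ^ (k : ℕ) * ‖if h : (k : ℕ) + 1 < ℓ then z ⟨k + 1, h⟩ else 0‖ := by
        rw [powerWeight_apply, norm_smul, Real.norm_of_nonneg (by positivity), ← mul_add]
        exact mul_le_mul_of_nonneg_left (norm_add_le _ _) (by positivity)
    _ ≤ (‖μ‖ + t⁻¹) * ‖powerWeight t z‖ := by rw [add_mul]; exact add_le_add hdiag hsuper

end JordanShift

lemma exists_absorbing_norm_of_contracting {m : ℕ} {V : Type*} [NormedAddCommGroup V]
    [NormedSpace ℝ V] (f : (Fin m → ℝ) → Fin m → ℝ) (T : (Fin m → ℝ) →ₗ[ℝ] V)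
    (hT : Function.Injective T) {ρ : ℝ} (hρ0 : 0 ≤ ρ) (hρ1 : ρ < 1)
    (hf : ∀ x, ‖T (f x)‖ ≤ ρ * ‖T x‖) :
    ∃ (N : (Fin m → ℝ) → ℝ) (γ : ℝ), IsNormOn N ∧ 0 < γ ∧
      ∀ (x ε : Fin m → ℝ), ‖ε‖ < 1/3 →
        (N x ≤ γ → N (f x + ε) ≤ γ) ∧
        (γ ≤ N x → N (f x + ε) ≤ N x - 1/2) := by
  set C := ‖LinearMap.toContinuousLinearMap T‖
  have hstep (x ε : Fin m → ℝ) (hε : ‖ε‖ < 1/3) : ‖T (f x + ε)‖ ≤ ρ * ‖T x‖ + C / 3 := by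
    have hTε : ‖T ε‖ ≤ C / 3 :=
      calc ‖T ε‖ ≤ C * ‖ε‖ := (LinearMap.toContinuousLinearMap T).le_opNorm ε
        _ ≤ C / 3 := by nlinarith [norm_nonneg (LinearMap.toContinuousLinearMap T)]
    rw [map_add]
    exact (norm_add_le _ _).trans (add_le_add (hf x) hTε)
  refine ⟨fun x => ‖T x‖, (C / 3 + 1/2) / (1 - ρ), isNormOn_norm_comp T hT,
    div_pos (by positivity) (by linarith), fun x ε hε => ?_⟩
  have hγ : (1 - ρ) * ((C / 3 + 1/2) / (1 - ρ)) = C / 3 + 1/2 := mul_div_cancel₀ _ (by linarith)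
  have := hstep x ε hε
  constructor <;> intro hx <;> nlinarith

lemma exists_absorbing_norm_of_intertwines {m ℓ : ℕ} {𝕜 : Type*} [NormedDivisionRing 𝕜]
    [NormedSpace ℝ 𝕜] (f : (Fin m → ℝ) → Fin m → ℝ) (P : (Fin m → ℝ) →ₗ[ℝ] Fin ℓ → 𝕜)
    (hP : Function.Injective P) {μ : 𝕜} (hμ : ‖μ‖ < 1)
    (hfP : ∀ x, P (f x) = jordanShift μ (P x)) :
    ∃ (N : (Fin m → ℝ) → ℝ) (γ : ℝ), IsNormOn N ∧ 0 < γ ∧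
      ∀ (x ε : Fin m → ℝ), ‖ε‖ < 1/3 →
        (N x ≤ γ → N (f x + ε) ≤ γ) ∧
        (γ ≤ N x → N (f x + ε) ≤ N x - 1/2) := by
  have ht : 0 < 2 / (1 - ‖μ‖) := div_pos two_pos (by linarith)
  refine exists_absorbing_norm_of_contracting f (powerWeight _ ∘ₗ P)
    ((powerWeight_injective ht.ne').comp hP) (ρ := (1 + ‖μ‖) / 2) (by positivity)
    (by linarith) fun x => ?_
  have := norm_powerWeight_jordanShift_le μ ht (P x)
  rw [inv_div] at this
  simpa only [LinearMap.comp_apply, hfP, show ‖μ‖ + (1 - ‖μ‖) / 2 = (1 + ‖μ‖) / 2 by ring]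
    using this

lemma sum_ite_val_eq {m : ℕ} {M : Type*} [AddCommMonoid M] (n : ℕ) (f : Fin m → M) :
    (∑ j : Fin m, if (j : ℕ) = n then f j else 0) = if h : n < m then f ⟨n, h⟩ else 0 := by
  split_ifs with h
  · have hval (j : Fin m) : (j : ℕ) = n ↔ j = ⟨n, h⟩ := (Fin.ext_iff (b := ⟨n, h⟩)).symm
    simp_rw [hval, Finset.sum_ite_eq', Finset.mem_univ, if_true]
  · exact Finset.sum_eq_zero fun j _ => if_neg (by omega)

lemma mulVec_eq_jordanShift {m : ℕ} {J : Matrix (Fin m) (Fin m) ℝ} {a : ℝ}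
    (hJ : ∀ i j : Fin m,
      J i j = if (j : ℕ) = (i : ℕ) then a else if (j : ℕ) = (i : ℕ) + 1 then 1 else 0)
    (x : Fin m → ℝ) : J.mulVec x = jordanShift a x := by
  funext i
  have hentry (j : Fin m) : J i j * x j =
      (if (j : ℕ) = i then a * x j else 0) + (if (j : ℕ) = i + 1 then x j else 0) := by
    rw [hJ]; split_ifs <;> first | omega | ring
  simp only [Matrix.mulVec, dotProduct, hentry, Finset.sum_add_distrib, sum_ite_val_eq, jordanShift,
    Fin.is_lt, ↓reduceDIte, Fin.eta]

def complexPairs (ℓ : ℕ) : (Fin (2 * ℓ) → ℝ) →ₗ[ℝ] Fin ℓ → ℂ where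
  toFun x k := ⟨x ⟨2 * k, by omega⟩, x ⟨2 * k + 1, by omega⟩⟩
  map_add' x y := rfl
  map_smul' c x := by funext k; apply Complex.ext <;> simp

lemma complexPairs_injective (ℓ : ℕ) : Function.Injective (complexPairs ℓ) := by
  intro x y h
  funext i
  have hk : (i : ℕ) / 2 < ℓ := by omega
  have hre := congrArg Complex.re (congrFun h ⟨i / 2, hk⟩)
  have him := congrArg Complex.im (congrFun h ⟨i / 2, hk⟩)
  simp only [complexPairs, LinearMap.coe_mk, AddHom.coe_mk] at hre him
  rcases Nat.mod_two_eq_zero_or_one i with hi | hi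
  · convert hre using 2 <;> ext <;> simp only <;> omega
  · convert him using 2 <;> ext <;> simp only <;> omega

lemma complexPairs_mulVec {ℓ : ℕ} {J : Matrix (Fin (2 * ℓ)) (Fin (2 * ℓ)) ℝ} {lam : ℂ}
    (hJ : ∀ i j : Fin (2 * ℓ),
      J i j = if (j : ℕ) / 2 = (i : ℕ) / 2 then
          (if (i : ℕ) % 2 = (j : ℕ) % 2 then lam.re
            else if (i : ℕ) % 2 = 0 then lam.im else -lam.im)
        else if (j : ℕ) = (i : ℕ) + 2 then 1 else 0)
    (x : Fin (2 * ℓ) → ℝ) :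
    complexPairs ℓ (J.mulVec x) = jordanShift (starRingEnd ℂ lam) (complexPairs ℓ x) := by
  funext k
  have hre (j : Fin (2 * ℓ)) : J ⟨2 * k, by omega⟩ j * x j =
      (if (j : ℕ) = 2 * k then lam.re * x j else 0) +
      (if (j : ℕ) = 2 * k + 1 then lam.im * x j else 0) +
      (if (j : ℕ) = 2 * k + 2 then x j else 0) := by
    rw [hJ]; dsimp only; split_ifs <;> first | omega | ring
  have him (j : Fin (2 * ℓ)) : J ⟨2 * k + 1, by omega⟩ j * x j =
      (if (j : ℕ) = 2 * k then -lam.im * x j else 0) +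
      (if (j : ℕ) = 2 * k + 1 then lam.re * x j else 0) +
      (if (j : ℕ) = 2 * k + 3 then x j else 0) := by
    rw [hJ]; dsimp only; split_ifs <;> first | omega | ring
  have h0 : 2 * (k : ℕ) < 2 * ℓ := by omega
  have h1 : 2 * (k : ℕ) + 1 < 2 * ℓ := by omega
  apply Complex.ext <;>
    simp only [complexPairs, LinearMap.coe_mk, AddHom.coe_mk, Matrix.mulVec, dotProduct, hre, him,
      Finset.sum_add_distrib, sum_ite_val_eq, jordanShift, h0, h1, ↓reduceDIte,
      Complex.add_re, Complex.add_im, Complex.mul_re, Complex.mul_im, Complex.conj_re,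
      Complex.conj_im]
  all_goals
    by_cases hk : (k : ℕ) + 1 < ℓ
    · have h2 : 2 * (k : ℕ) + 2 < 2 * ℓ := by omega
      have h3 : 2 * (k : ℕ) + 3 < 2 * ℓ := by omega
      simp only [hk, h2, h3, ↓reduceDIte, mul_add, mul_one]
      ring
    · have h2 : ¬ 2 * (k : ℕ) + 2 < 2 * ℓ := by omega
      have h3 : ¬ 2 * (k : ℕ) + 3 < 2 * ℓ := by omega
      simp only [hk, h2, h3, ↓reduceDIte, Complex.zero_re, Complex.zero_im]
      ring

theorem stmt_2 {m : ℕ} (J : Matrix (Fin m) (Fin m) ℝ) (lam : ℂ)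
    (hJ : IsRealJordanBlock J lam) (hlam : ‖lam‖ < 1) :
    ∃ (N : (Fin m → ℝ) → ℝ) (γ : ℝ), IsNormOn N ∧ 0 < γ ∧
      ∀ (x ε : Fin m → ℝ), ‖ε‖ < 1/3 →
        (N x ≤ γ → N (J.mulVec x + ε) ≤ γ) ∧
        (γ ≤ N x → N (J.mulVec x + ε) ≤ N x - 1/2) := by
  rcases hJ with ⟨him, hJ⟩ | ⟨-, ⟨ℓ, rfl⟩, hJ⟩
  · have hre : ‖lam.re‖ < 1 := by rwa [Real.norm_eq_abs, Complex.abs_re_eq_norm.2 him]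
    exact exists_absorbing_norm_of_intertwines J.mulVec LinearMap.id Function.injective_id hre
      (mulVec_eq_jordanShift hJ)
  · have hconj : ‖starRingEnd ℂ lam‖ < 1 := by rwa [Complex.norm_conj]
    exact exists_absorbing_norm_of_intertwines J.mulVec (complexPairs ℓ)
      (complexPairs_injective ℓ) hconj (complexPairs_mulVec hJ)
end

section
/- Let J ∈ ℝ^{m×m} be a real Jordan block to an eigenvalue λ with |λ| > 1, let E = {ε ∈ ℝ^m : ‖ε‖_∞ < 1/3}, and let D = {d ∈ ℤ^m : ‖d‖_∞ ≤ 2|λ| + 2 + 1/3}. Then for each x ∈ ℝ^m with ‖x‖_∞ ≤ 1 there exists d ∈ D such that for all ε ∈ E the vector y = Jx − d + ε satisfies ‖y‖_∞ ≤ 1. -/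
open Matrix

lemma Fin.sum_ite_val_eq_le {m : ℕ} (k : ℕ) {c : ℝ} (hc : 0 ≤ c) :
    ∑ j : Fin m, (if (j : ℕ) = k then c else 0) ≤ c := by
  rw [Fin.sum_univ_eq_sum_range (fun j => if j = k then c else 0), Finset.sum_ite_eq']
  split_ifs
  exacts [le_rfl, hc]

lemma abs_mulVec_apply_le {ι κ : Type*} [Fintype κ] (A : Matrix ι κ ℝ) (x : κ → ℝ) (i : ι) :
    |(A *ᵥ x) i| ≤ (∑ j, |A i j|) * ‖x‖ :=
  calc |(A *ᵥ x) i| = |∑ j, A i j * x j| := rfl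
    _ ≤ ∑ j, |A i j| * |x j| := by
        simpa only [abs_mul] using Finset.abs_sum_le_sum_abs (fun j => A i j * x j) Finset.univ
    _ ≤ ∑ j, |A i j| * ‖x‖ := by gcongr with j; exact norm_le_pi_norm x j
    _ = (∑ j, |A i j|) * ‖x‖ := (Finset.sum_mul ..).symm

namespace IsRealJordanBlock

variable {m : ℕ} {J : Matrix (Fin m) (Fin m) ℝ} {lam : ℂ}

/-- `p` is the column of the off-diagonal entry of `i`'s `2 × 2` block (complex case) and `q` the
column of the `1` above the diagonal. -/
lemma abs_apply_le (hJ : IsRealJordanBlock J lam) (i : Fin m) :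
    ∃ p q : ℕ, ∀ j : Fin m, |J i j| ≤ (if (j : ℕ) = i then |lam.re| else 0) +
      (if (j : ℕ) = p then |lam.im| else 0) + (if (j : ℕ) = q then 1 else 0) := by
  rcases hJ with ⟨him, hrow⟩ | ⟨-, -, hrow⟩
  · refine ⟨i, i + 1, fun j => ?_⟩
    rw [hrow, him, abs_zero]
    split_ifs <;> first | omega | simp
  · refine ⟨2 * (i / 2) + (1 - i % 2), i + 2, fun j => ?_⟩
    rw [hrow]
    split_ifs <;> first | omega | simp

lemma sum_abs_row_le (hJ : IsRealJordanBlock J lam) (i : Fin m) :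
    ∑ j, |J i j| ≤ 2 * ‖lam‖ + 1 := by
  obtain ⟨p, q, hle⟩ := hJ.abs_apply_le i
  calc ∑ j, |J i j|
      ≤ ∑ j : Fin m, (if (j : ℕ) = i then |lam.re| else 0) +
          ∑ j : Fin m, (if (j : ℕ) = p then |lam.im| else 0) +
          ∑ j : Fin m, (if (j : ℕ) = q then 1 else 0) := by
        simpa only [Finset.sum_add_distrib] using Finset.sum_le_sum fun j _ => hle j
    _ ≤ |lam.re| + |lam.im| + 1 := by
        gcongr <;> exact Fin.sum_ite_val_eq_le _ (by positivity)
    _ ≤ 2 * ‖lam‖ + 1 := by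
        linarith [Complex.abs_re_le_norm lam, Complex.abs_im_le_norm lam]

lemma abs_mulVec_apply_le (hJ : IsRealJordanBlock J lam) (x : Fin m → ℝ) (i : Fin m) :
    |(J *ᵥ x) i| ≤ (2 * ‖lam‖ + 1) * ‖x‖ :=
  (_root_.abs_mulVec_apply_le J x i).trans (by gcongr; exact hJ.sum_abs_row_le i)

end IsRealJordanBlock

lemma abs_round_le (r : ℝ) : |(round r : ℝ)| ≤ |r| + 1 / 2 := by
  have := abs_sub_round r
  have := abs_sub_abs_le_abs_sub (round r : ℝ) r
  rw [abs_sub_comm] at this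
  linarith

lemma norm_sub_round_add_le {ι : Type*} [Fintype ι] (v ε : ι → ℝ) :
    ‖v - (fun i => (round (v i) : ℝ)) + ε‖ ≤ 1 / 2 + ‖ε‖ := by
  refine (pi_norm_le_iff_of_nonneg (by positivity)).2 fun i => ?_
  calc |v i - round (v i) + ε i| ≤ |v i - round (v i)| + |ε i| := abs_add_le _ _
    _ ≤ 1 / 2 + ‖ε‖ := add_le_add (abs_sub_round _) (norm_le_pi_norm ε i)

theorem stmt_4_general {m : ℕ} (J : Matrix (Fin m) (Fin m) ℝ) (lam : ℂ)
    (hJ : IsRealJordanBlock J lam)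
    (x : Fin m → ℝ) (hx : ‖x‖ ≤ 1) :
    ∃ d : Fin m → ℤ, (∀ i, |(d i : ℝ)| ≤ 2 * ‖lam‖ + 2 + 1/3) ∧
      ∀ ε : Fin m → ℝ, ‖ε‖ < 1/3 →
        ‖J.mulVec x - (fun i => (d i : ℝ)) + ε‖ ≤ 1 := by
  refine ⟨fun i => round ((J *ᵥ x) i), fun i => ?_, fun ε hε => ?_⟩
  · have hJx : |(J *ᵥ x) i| ≤ 2 * ‖lam‖ + 1 :=
      (hJ.abs_mulVec_apply_le x i).trans (mul_le_of_le_one_right (by positivity) hx)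
    linarith [abs_round_le ((J *ᵥ x) i)]
  · linarith [norm_sub_round_add_le (J *ᵥ x) ε]

theorem stmt_4 {m : ℕ} (J : Matrix (Fin m) (Fin m) ℝ) (lam : ℂ)
    (hJ : IsRealJordanBlock J lam) (hlam : 1 < ‖lam‖)
    (x : Fin m → ℝ) (hx : ‖x‖ ≤ 1) :
    ∃ d : Fin m → ℤ, (∀ i, |(d i : ℝ)| ≤ 2 * ‖lam‖ + 2 + 1/3) ∧
      ∀ ε : Fin m → ℝ, ‖ε‖ < 1/3 →
        ‖J.mulVec x - (fun i => (d i : ℝ)) + ε‖ ≤ 1 :=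
  stmt_4_general J lam hJ x hx
end

section
/- Let M ∈ ℤ^{m×m} with det M ≠ 0 and let D ⊂ ℤ^m be a finite set containing 0 such that ℤ^m ⊆ Fin_D(M). Then Fin_D(M) is closed under addition and subtraction. -/
/-!
Writing `A` for `M` viewed over `ℚ`, the set `Fin_D(M)` is invariant under every power `A ^ n`,
`n ∈ ℤ` (shift the exponents of a representation), and it contains `ℤ^m` by hypothesis, hence
`A ^ (-n) ℤ^m` for all `n`. Conversely, if `x = ∑_{k ∈ I} A ^ k d_k` then `A ^ n x ∈ ℤ^m` as soon
as `n ≥ -min I`. So for `x, y ∈ Fin_D(M)` there is a common `n` with `A ^ n (x ± y) ∈ ℤ^m`, and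
`x ± y ∈ A ^ (-n) ℤ^m ⊆ Fin_D(M)`.
-/

open Filter Matrix

/-- The set of vectors representable as a finite sum `∑_{k ∈ I} M^k d_k` with `I ⊂ ℤ`
finite nonempty and digits `d_k ∈ D`, where negative powers of `M` are taken over `ℚ`. -/
noncomputable def FinD {m : ℕ} (M : Matrix (Fin m) (Fin m) ℤ) (D : Set (Fin m → ℤ)) :
    Set (Fin m → ℚ) :=
  {x | ∃ I : Finset ℤ, I.Nonempty ∧ ∃ c : ℤ → (Fin m → ℤ), (∀ k ∈ I, c k ∈ D) ∧
    x = ∑ k ∈ I, ((M.map (Int.cast : ℤ → ℚ)) ^ k).mulVec (fun i => (c k i : ℚ))}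

def intLattice (ι : Type*) : AddSubgroup (ι → ℚ) :=
  ((Int.castAddHom ℚ).compLeft ι).range

section intLattice

variable {ι : Type*}

theorem mem_intLattice {v : ι → ℚ} :
    v ∈ intLattice ι ↔ ∃ z : ι → ℤ, (fun i => (z i : ℚ)) = v :=
  Iff.rfl

theorem intCast_mem_intLattice (z : ι → ℤ) : (fun i => (z i : ℚ)) ∈ intLattice ι :=
  ⟨z, rfl⟩

variable [Fintype ι] [DecidableEq ι] (M : Matrix ι ι ℤ)

theorem isUnit_det_map_intCast (hM : M.det ≠ 0) : IsUnit (M.map (Int.cast : ℤ → ℚ)).det := by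
  rw [← Int.cast_det]
  exact isUnit_iff_ne_zero.mpr (Int.cast_ne_zero.mpr hM)

theorem pow_mulVec_mem_intLattice (k : ℕ) {v : ι → ℚ} (hv : v ∈ intLattice ι) :
    (M.map (Int.cast : ℤ → ℚ) ^ k) *ᵥ v ∈ intLattice ι := by
  obtain ⟨z, rfl⟩ := mem_intLattice.mp hv
  refine mem_intLattice.mpr ⟨(M ^ k) *ᵥ z, funext fun i => ?_⟩
  have hcast := (Int.castRingHom ℚ).map_mulVec (M ^ k) z i
  rwa [Matrix.map_pow] at hcast

theorem zpow_mulVec_mem_intLattice {k : ℤ} (hk : 0 ≤ k) {v : ι → ℚ} (hv : v ∈ intLattice ι) :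
    (M.map (Int.cast : ℤ → ℚ) ^ k) *ᵥ v ∈ intLattice ι := by
  lift k to ℕ using hk
  rw [zpow_natCast]
  exact pow_mulVec_mem_intLattice M k hv

end intLattice

section FinD

variable {m : ℕ} {M : Matrix (Fin m) (Fin m) ℤ} {D : Set (Fin m → ℤ)}

theorem zpow_mulVec_mem_finD (hM : M.det ≠ 0) (n : ℤ) {x : Fin m → ℚ} (hx : x ∈ FinD M D) :
    (M.map (Int.cast : ℤ → ℚ) ^ n) *ᵥ x ∈ FinD M D := by
  obtain ⟨I, hI, c, hc, rfl⟩ := hx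
  refine ⟨I.map (addRightEmbedding n), hI.map, fun k => c (k - n), ?_, ?_⟩
  · simpa using hc
  · rw [mulVec_sum, Finset.sum_map]
    refine Finset.sum_congr rfl fun k _ => ?_
    rw [mulVec_mulVec, ← zpow_add (isUnit_det_map_intCast M hM), addRightEmbedding_apply,
      add_comm n k]
    simp only [add_sub_cancel_right]

theorem eventually_zpow_mulVec_mem_intLattice (hM : M.det ≠ 0) {x : Fin m → ℚ}
    (hx : x ∈ FinD M D) :
    ∀ᶠ n : ℤ in atTop, (M.map (Int.cast : ℤ → ℚ) ^ n) *ᵥ x ∈ intLattice (Fin m) := by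
  obtain ⟨I, hI, c, -, rfl⟩ := hx
  filter_upwards [eventually_ge_atTop (-I.min' hI)] with n hn
  rw [mulVec_sum]
  refine AddSubgroup.sum_mem _ fun k hk => ?_
  rw [mulVec_mulVec, ← zpow_add (isUnit_det_map_intCast M hM)]
  exact zpow_mulVec_mem_intLattice M (by linarith [I.min'_le k hk]) (intCast_mem_intLattice _)

theorem mem_finD_of_zpow_mulVec_mem_intLattice (hM : M.det ≠ 0)
    (hZ : ∀ z : Fin m → ℤ, (fun i => (z i : ℚ)) ∈ FinD M D) (n : ℤ) {v : Fin m → ℚ}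
    (hv : (M.map (Int.cast : ℤ → ℚ) ^ n) *ᵥ v ∈ intLattice (Fin m)) : v ∈ FinD M D := by
  obtain ⟨z, hz⟩ := mem_intLattice.mp hv
  have hshift := zpow_mulVec_mem_finD hM (-n) (hZ z)
  rwa [hz, mulVec_mulVec, zpow_neg_mul_zpow_self n (isUnit_det_map_intCast M hM),
    one_mulVec] at hshift

end FinD

theorem stmt_9_general {m : ℕ} (M : Matrix (Fin m) (Fin m) ℤ) (hM : M.det ≠ 0)
    (D : Set (Fin m → ℤ))
    (hZ : ∀ z : Fin m → ℤ, (fun i => (z i : ℚ)) ∈ FinD M D) :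
    ∀ x ∈ FinD M D, ∀ y ∈ FinD M D, x + y ∈ FinD M D ∧ x - y ∈ FinD M D := by
  intro x hx y hy
  obtain ⟨n, hxn, hyn⟩ := ((eventually_zpow_mulVec_mem_intLattice hM hx).and
    (eventually_zpow_mulVec_mem_intLattice hM hy)).exists
  constructor
  · refine mem_finD_of_zpow_mulVec_mem_intLattice hM hZ n ?_
    rw [mulVec_add]
    exact add_mem hxn hyn
  · refine mem_finD_of_zpow_mulVec_mem_intLattice hM hZ n ?_
    rw [mulVec_sub]
    exact sub_mem hxn hyn

theorem stmt_9 {m : ℕ} (M : Matrix (Fin m) (Fin m) ℤ) (hM : M.det ≠ 0)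
    (D : Set (Fin m → ℤ)) (hD : D.Finite) (h0 : (0 : Fin m → ℤ) ∈ D)
    (hZ : ∀ z : Fin m → ℤ, (fun i => (z i : ℚ)) ∈ FinD M D) :
    ∀ x ∈ FinD M D, ∀ y ∈ FinD M D, x + y ∈ FinD M D ∧ x - y ∈ FinD M D :=
  stmt_9_general M hM D hZ
end

section
/- Let M ∈ ℤ^{m×m} with det M = Δ ≠ 0 and D ⊂ ℤ^m finite with 0 ∈ D and ℤ^m ⊆ Fin_D(M). Then Fin_D(M) = ⋃_{k∈ℕ} (1/Δ^k)ℤ^m if and only if for each i ∈ {1,…,m} there exists ℓ_i ∈ ℕ such that (1/Δ)e_i ∈ M^{-ℓ_i}(ℤ^m), where e_i is the i-th standard basis vector. -/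
/-!
Since `M` is invertible over `ℚ` and `Fin_D(M)` is invariant under every power of `M`, the
hypothesis `ℤ^m ⊆ Fin_D(M)` makes `Fin_D(M)` equal to `⋃_N M^{-N} ℤ^m`: multiplying a digit
expansion by `M^N` clears its negative exponents. By `M^{-N} = adj(M)^N / Δ^N` this set always lies
in `⋃_k Δ^{-k} ℤ^m`. Conversely, `(1/Δ) e_i ∈ M^{-ℓ_i} ℤ^m` says that `Δ` divides the `i`-th column
of `M^{ℓ_i}`, hence every entry of `M^L` for `L = max ℓ_i`; writing `M^L = Δ B` gives
`Δ^{-k} v = M^{-kL} (B^k v)`.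
-/

open Matrix

variable {n : Type*} [Fintype n]

lemma Int.cast_mulVec (A : Matrix n n ℤ) (v : n → ℤ) :
    (fun i => ((A *ᵥ v) i : ℚ)) = A.map (Int.cast : ℤ → ℚ) *ᵥ fun i => (v i : ℚ) :=
  funext <| (Int.castRingHom ℚ).map_mulVec A v

variable [DecidableEq n]

namespace Matrix

lemma map_intCast_pow (A : Matrix n n ℤ) (k : ℕ) :
    (A ^ k).map (Int.cast : ℤ → ℚ) = A.map (Int.cast : ℤ → ℚ) ^ k :=
  map_pow (Int.castRingHom ℚ).mapMatrix A k

lemma isUnit_det_map_intCast {A : Matrix n n ℤ} (hA : A.det ≠ 0) :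
    IsUnit (A.map (Int.cast : ℤ → ℚ)).det := by
  rw [← Int.cast_det]; exact isUnit_iff_ne_zero.mpr (Int.cast_ne_zero.mpr hA)

lemma map_intCast_zpow_neg_natCast (A : Matrix n n ℤ) (N : ℕ) :
    A.map (Int.cast : ℤ → ℚ) ^ (-(N : ℤ)) =
      ((A.det : ℚ) ^ N)⁻¹ • (A.adjugate ^ N).map (Int.cast : ℤ → ℚ) := by
  rw [zpow_neg_natCast, ← inv_pow', inv_def, ← Int.cast_det, Ring.inverse_eq_inv', smul_pow,
    inv_pow, map_intCast_pow]
  congr 2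
  exact ((Int.castRingHom ℚ).map_adjugate A).symm

end Matrix

def invPowLattice (M : Matrix n n ℤ) : Set (n → ℚ) :=
  {x | ∃ (N : ℕ) (w : n → ℤ), x = M.map (Int.cast : ℤ → ℚ) ^ (-(N : ℤ)) *ᵥ fun i => (w i : ℚ)}

def denomPowLattice (d : ℤ) : Set (n → ℚ) :=
  {x | ∃ (k : ℕ) (v : n → ℤ), x = fun i => (v i : ℚ) / (d : ℚ) ^ k}

lemma mem_invPowLattice_of_pow_mulVec_eq {M : Matrix n n ℤ} (hM : M.det ≠ 0)
    {x : n → ℚ} {N : ℕ} {w : n → ℤ}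
    (h : M.map (Int.cast : ℤ → ℚ) ^ N *ᵥ x = fun i => (w i : ℚ)) : x ∈ invPowLattice M := by
  refine ⟨N, w, ?_⟩
  rw [← h, mulVec_mulVec, ← zpow_natCast, ← zpow_add (isUnit_det_map_intCast hM), neg_add_cancel,
    zpow_zero, one_mulVec]

lemma invPowLattice_subset_denomPowLattice (M : Matrix n n ℤ) :
    invPowLattice M ⊆ denomPowLattice M.det := by
  rintro _ ⟨N, w, rfl⟩
  refine ⟨N, M.adjugate ^ N *ᵥ w, ?_⟩
  rw [map_intCast_zpow_neg_natCast, smul_mulVec, ← Int.cast_mulVec]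
  funext i
  simp only [Pi.smul_apply, smul_eq_mul, inv_mul_eq_div]

namespace FinD

variable {m : ℕ} {M : Matrix (Fin m) (Fin m) ℤ} {D : Set (Fin m → ℤ)}

lemma zpow_mulVec_mem (hM : M.det ≠ 0) {x : Fin m → ℚ} (hx : x ∈ FinD M D) (k : ℤ) :
    M.map (Int.cast : ℤ → ℚ) ^ k *ᵥ x ∈ FinD M D := by
  obtain ⟨I, hI, c, hc, rfl⟩ := hx
  refine ⟨I.map (addLeftEmbedding k), hI.map, fun l => c (l - k), ?_, ?_⟩
  · simpa using hc
  · simp only [Finset.sum_map, mulVec_sum, addLeftEmbedding_apply, add_sub_cancel_left,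
      mulVec_mulVec, ← zpow_add (isUnit_det_map_intCast hM)]

lemma subset_invPowLattice (hM : M.det ≠ 0) : FinD M D ⊆ invPowLattice M := by
  rintro _ ⟨I, -, c, -, rfl⟩
  obtain ⟨b, hb⟩ := I.bddBelow
  refine mem_invPowLattice_of_pow_mulVec_eq hM
    (N := b.natAbs) (w := ∑ k ∈ I, M ^ (b.natAbs + k).toNat *ᵥ c k) ?_
  funext i
  simp only [mulVec_sum, Finset.sum_apply, Int.cast_sum]
  refine Finset.sum_congr rfl fun k hk => ?_
  obtain ⟨e, he⟩ := Int.eq_ofNat_of_zero_le (a := b.natAbs + k) (by have := hb hk; omega)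
  rw [mulVec_mulVec, ← zpow_natCast, ← zpow_add (isUnit_det_map_intCast hM), he,
    Int.toNat_natCast, zpow_natCast, ← map_intCast_pow, ← Int.cast_mulVec]

lemma invPowLattice_subset (hM : M.det ≠ 0)
    (hZ : ∀ z : Fin m → ℤ, (fun i => (z i : ℚ)) ∈ FinD M D) : invPowLattice M ⊆ FinD M D := by
  rintro _ ⟨N, w, rfl⟩
  exact zpow_mulVec_mem hM (hZ w) _

end FinD

lemma dvd_pow_apply_of_single_div_eq {M : Matrix n n ℤ} (hM : M.det ≠ 0)
    {d : ℤ} (hd : d ≠ 0) {i : n} {ℓ : ℕ} {v : n → ℤ}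
    (h : (fun j => (if j = i then (1 : ℚ) else 0) / (d : ℚ)) =
      M.map (Int.cast : ℤ → ℚ) ^ (-(ℓ : ℤ)) *ᵥ fun j => (v j : ℚ)) (j : n) :
    d ∣ (M ^ ℓ) j i := by
  have hsingle : (fun j => (if j = i then (1 : ℚ) else 0) / (d : ℚ)) =
      (d : ℚ)⁻¹ • Pi.single i 1 := by
    funext j; by_cases hji : j = i <;> simp [hji, div_eq_inv_mul]
  have hcol := congrFun (congrArg (M.map (Int.cast : ℤ → ℚ) ^ ℓ *ᵥ ·) h) j
  rw [hsingle, mulVec_smul, mulVec_single_one, mulVec_mulVec, ← zpow_natCast,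
    ← zpow_add (isUnit_det_map_intCast hM), add_neg_cancel, zpow_zero, one_mulVec,
    zpow_natCast, ← map_intCast_pow] at hcol
  simp only [Pi.smul_apply, col_apply, map_apply, smul_eq_mul] at hcol
  refine ⟨v j, ?_⟩
  have : ((M ^ ℓ) j i : ℚ) = d * v j := by
    rw [← hcol, mul_inv_cancel_left₀ (Int.cast_ne_zero.mpr hd)]
  exact_mod_cast this

lemma exists_pow_eq_smul_of_forall_single_div_eq {M : Matrix n n ℤ} (hM : M.det ≠ 0)
    {d : ℤ} (hd : d ≠ 0)
    (h : ∀ i : n, ∃ (ℓ : ℕ) (v : n → ℤ),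
      (fun j => (if j = i then (1 : ℚ) else 0) / (d : ℚ)) =
        M.map (Int.cast : ℤ → ℚ) ^ (-(ℓ : ℤ)) *ᵥ fun j => (v j : ℚ)) :
    ∃ (L : ℕ) (B : Matrix n n ℤ), M ^ L = d • B := by
  choose ℓ v hv using h
  set L := Finset.univ.sup ℓ
  have hdvd (j i : n) : d ∣ (M ^ L) j i := by
    rw [← pow_sub_mul_pow M (Finset.le_sup (Finset.mem_univ i) : ℓ i ≤ L), mul_apply]
    exact Finset.dvd_sum fun k _ => (dvd_pow_apply_of_single_div_eq hM hd (hv i) k).mul_left _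
  exact ⟨L, of fun j i => (M ^ L) j i / d, ext fun j i => (Int.mul_ediv_cancel' (hdvd j i)).symm⟩

lemma denomPowLattice_subset_invPowLattice {M : Matrix n n ℤ} (hM : M.det ≠ 0)
    {d : ℤ} (hd : d ≠ 0) {L : ℕ} {B : Matrix n n ℤ} (hB : M ^ L = d • B) :
    denomPowLattice d ⊆ invPowLattice M := by
  rintro _ ⟨k, v, rfl⟩
  refine mem_invPowLattice_of_pow_mulVec_eq hM (N := L * k) (w := B ^ k *ᵥ v) ?_
  have hpow : M.map (Int.cast : ℤ → ℚ) ^ (L * k) = ((d : ℚ) ^ k) • (B ^ k).map Int.cast := by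
    rw [pow_mul, ← map_intCast_pow, ← map_intCast_pow, hB, smul_pow]
    ext; simp only [map_apply, Matrix.smul_apply, smul_eq_mul, Int.cast_mul, Int.cast_pow]
  have hvec : (fun i => (v i : ℚ) / (d : ℚ) ^ k) = ((d : ℚ) ^ k)⁻¹ • fun i => (v i : ℚ) := by
    funext i; simp [div_eq_inv_mul]
  rw [hpow, hvec, smul_mulVec, mulVec_smul, smul_smul,
    mul_inv_cancel₀ (pow_ne_zero k (Int.cast_ne_zero.mpr hd)), one_smul, Int.cast_mulVec]

theorem stmt_11_general {m : ℕ} (M : Matrix (Fin m) (Fin m) ℤ) (hM : M.det ≠ 0)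
    (D : Set (Fin m → ℤ))
    (hZ : ∀ z : Fin m → ℤ, (fun i => (z i : ℚ)) ∈ FinD M D) :
    FinD M D = {x | ∃ (k : ℕ) (v : Fin m → ℤ), x = fun i => (v i : ℚ) / (M.det : ℚ) ^ k} ↔
      ∀ i : Fin m, ∃ (ℓ : ℕ) (v : Fin m → ℤ),
        (fun j => (if j = i then (1 : ℚ) else 0) / (M.det : ℚ)) =
          ((M.map (Int.cast : ℤ → ℚ)) ^ (-(ℓ : ℤ))).mulVec (fun j => (v j : ℚ)) := by
  rw [(FinD.subset_invPowLattice hM).antisymm (FinD.invPowLattice_subset hM hZ)]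
  constructor
  · intro h i
    have hmem : (fun j => (if j = i then (1 : ℚ) else 0) / (M.det : ℚ)) ∈ denomPowLattice M.det :=
      ⟨1, Pi.single i 1, by funext j; by_cases hji : j = i <;> simp [hji]⟩
    rw [denomPowLattice, ← h] at hmem
    exact hmem
  · intro h
    obtain ⟨L, B, hB⟩ := exists_pow_eq_smul_of_forall_single_div_eq hM hM h
    exact (invPowLattice_subset_denomPowLattice M).antisymm
      (denomPowLattice_subset_invPowLattice hM hM hB)

theorem stmt_11 {m : ℕ} (M : Matrix (Fin m) (Fin m) ℤ) (hM : M.det ≠ 0)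
    (D : Set (Fin m → ℤ)) (hD : D.Finite) (h0 : (0 : Fin m → ℤ) ∈ D)
    (hZ : ∀ z : Fin m → ℤ, (fun i => (z i : ℚ)) ∈ FinD M D) :
    FinD M D = {x | ∃ (k : ℕ) (v : Fin m → ℤ), x = fun i => (v i : ℚ) / (M.det : ℚ) ^ k} ↔
      ∀ i : Fin m, ∃ (ℓ : ℕ) (v : Fin m → ℤ),
        (fun j => (if j = i then (1 : ℚ) else 0) / (M.det : ℚ)) =
          ((M.map (Int.cast : ℤ → ℚ)) ^ (-(ℓ : ℤ))).mulVec (fun j => (v j : ℚ)) :=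
  stmt_11_general M hM D hZ
end
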